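/- arXiv:2111.07430 — 3 statements merged into one kernel-verified Lean document; each statement's English description precedes it below -/
import Mathlib

section
/- Let a_i, â_i ∈ ℝ^d, b_i ∈ ℝ, V symmetric positive definite, β > 0, L > 0, and suppose ‖â_i − a_i‖_V ≤ β for all i ∈ [1,m]. Define X_in = {x : ∀i, a_i^⊤ x + 2βL/√(λ_min(V)) ≤ b_i} and X̂ = {x : ∀i, â_i^⊤ x + β‖x‖_{V^{-1}} ≤ b_i}. Then every x ∈ X_in with ‖x‖₂ ≤ L lies in X̂. -/
/-!
Write `âᵢ = aᵢ + uᵢ`. The norms `‖·‖_V` and `‖·‖_{V⁻¹}` are dual, so Cauchy–Schwarz gives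
`uᵢ ⬝ x ≤ ‖uᵢ‖_V ‖x‖_{V⁻¹} ≤ β ‖x‖_{V⁻¹}`; and `λ_min(V) • 1 ≤ V` in the Loewner order means
`V⁻¹ ≤ λ_min(V)⁻¹ • 1`, whence `‖x‖_{V⁻¹} ≤ ‖x‖₂ / √λ_min ≤ L / √λ_min`. Thus the estimation
error and the robustness term `β ‖x‖_{V⁻¹}` are each at most `β L / √λ_min`, and together they
fit in the margin `2 β L / √λ_min` of `X_in`.
-/

namespace Matrix

open scoped MatrixOrder

variable {n : Type*} [Fintype n]

theorem PosSemidef.dotProduct_mulVec_sq_le {M : Matrix n n ℝ} (hM : M.PosSemidef) (x y : n → ℝ) :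
    (x ⬝ᵥ M *ᵥ y) ^ 2 ≤ (x ⬝ᵥ M *ᵥ x) * (y ⬝ᵥ M *ᵥ y) := by
  let _ := M.toSeminormedAddCommGroup hM
  let _ := M.toInnerProductSpace hM
  have hinner : ∀ v w : n → ℝ, inner ℝ v w = v ⬝ᵥ M *ᵥ w := fun v w => dotProduct_comm _ _
  simpa only [sq, hinner] using real_inner_mul_inner_self_le x y

variable [DecidableEq n]

theorem dotProduct_mulVec_le_of_le_algebraMap {A : Matrix n n ℝ} {r : ℝ}
    (h : A ≤ algebraMap ℝ (Matrix n n ℝ) r) (x : n → ℝ) : x ⬝ᵥ A *ᵥ x ≤ r * (x ⬝ᵥ x) := by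
  have := (le_iff.mp h).dotProduct_mulVec_nonneg x
  rwa [Algebra.algebraMap_eq_smul_one, sub_mulVec, smul_mulVec, one_mulVec, star_trivial,
    dotProduct_sub, dotProduct_smul, smul_eq_mul, sub_nonneg] at this

variable {V : Matrix n n ℝ}

theorem PosDef.dotProduct_le_sqrt_mul_sqrt_inv (hV : V.PosDef) (u x : n → ℝ) :
    u ⬝ᵥ x ≤ √(u ⬝ᵥ V *ᵥ u) * √(x ⬝ᵥ V⁻¹ *ᵥ x) := by
  have hVV : V *ᵥ V⁻¹ *ᵥ x = x := by
    rw [mulVec_mulVec, mul_nonsing_inv V (isUnit_iff_isUnit_det V |>.mp hV.isUnit), one_mulVec]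
  have h := hV.posSemidef.dotProduct_mulVec_sq_le u (V⁻¹ *ᵥ x)
  rw [hVV, dotProduct_comm (V⁻¹ *ᵥ x)] at h
  rw [← Real.sqrt_mul (by simpa using hV.posSemidef.dotProduct_mulVec_nonneg u)]
  exact Real.le_sqrt_of_sq_le h

theorem PosDef.inv_le_algebraMap_inv (hV : V.PosDef) {c : ℝ} (hc : 0 < c)
    (hle : ∀ i, c ≤ hV.1.eigenvalues i) : V⁻¹ ≤ algebraMap ℝ (Matrix n n ℝ) c⁻¹ := by
  rw [le_algebraMap_iff_spectrum_le hV.inv.1.isSelfAdjoint]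
  intro μ hμ
  have hμV : μ⁻¹ ∈ spectrum ℝ V := by
    simpa using spectrum.inv₀_mem_iff (a := hV.isUnit.unit) |>.mpr (by simpa using hμ)
  obtain ⟨i, hi⟩ := hV.1.spectrum_real_eq_range_eigenvalues ▸ hμV
  have hcμ : c ≤ μ⁻¹ := hi ▸ hle i
  exact (le_inv_comm₀ hc (inv_pos.mp (hc.trans_le hcμ))).mp hcμ

theorem PosDef.sqrt_dotProduct_inv_mulVec_le (hV : V.PosDef) {c : ℝ} (hc : 0 < c)
    (hle : ∀ i, c ≤ hV.1.eigenvalues i) (x : n → ℝ) :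
    √(x ⬝ᵥ V⁻¹ *ᵥ x) ≤ √(x ⬝ᵥ x) / √c := by
  have h := dotProduct_mulVec_le_of_le_algebraMap (hV.inv_le_algebraMap_inv hc hle) x
  have hnonneg : 0 ≤ x ⬝ᵥ V⁻¹ *ᵥ x := by simpa using hV.inv.posSemidef.dotProduct_mulVec_nonneg x
  rw [le_div_iff₀ (Real.sqrt_pos.mpr hc), ← Real.sqrt_mul hnonneg]
  refine Real.sqrt_le_sqrt ?_
  rwa [← le_div_iff₀ hc, div_eq_inv_mul]

end Matrix

open Matrix

theorem shrunk_subset_conservative_general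
    (d m : ℕ) (hd : 0 < d)
    (a ahat : Fin m → (Fin d → ℝ)) (b : Fin m → ℝ)
    (V : Matrix (Fin d) (Fin d) ℝ) (hV : V.PosDef)
    (β L lammin : ℝ) (hβ : 0 < β)
    (hlam : lammin = ⨅ i, hV.1.eigenvalues i)
    (hconf : ∀ i, Real.sqrt ((ahat i - a i) ⬝ᵥ V.mulVec (ahat i - a i)) ≤ β)
    (x : Fin d → ℝ)
    (hxin : ∀ i, a i ⬝ᵥ x + 2 * β * L / Real.sqrt lammin ≤ b i)
    (hxnorm : Real.sqrt (x ⬝ᵥ x) ≤ L) :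
    ∀ i, ahat i ⬝ᵥ x + β * Real.sqrt (x ⬝ᵥ V⁻¹.mulVec x) ≤ b i := by
  have : Nonempty (Fin d) := Fin.pos_iff_nonempty.mp hd
  have hle : ∀ j, lammin ≤ hV.1.eigenvalues j :=
    hlam ▸ ciInf_le (Set.finite_range _).bddBelow
  have hpos : 0 < lammin := by
    obtain ⟨j, hj⟩ := exists_eq_ciInf_of_finite (f := hV.1.eigenvalues)
    exact hlam ▸ hj ▸ hV.eigenvalues_pos j
  have hdual : √(x ⬝ᵥ V⁻¹ *ᵥ x) ≤ L / √lammin :=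
    (hV.sqrt_dotProduct_inv_mulVec_le hpos hle x).trans
      (div_le_div_of_nonneg_right hxnorm (Real.sqrt_nonneg _))
  intro i
  have hdev : (ahat i - a i) ⬝ᵥ x ≤ β * √(x ⬝ᵥ V⁻¹ *ᵥ x) :=
    (hV.dotProduct_le_sqrt_mul_sqrt_inv _ x).trans
      (mul_le_mul_of_nonneg_right (hconf i) (Real.sqrt_nonneg _))
  have hmargin : β * √(x ⬝ᵥ V⁻¹ *ᵥ x) ≤ β * (L / √lammin) :=
    mul_le_mul_of_nonneg_left hdual hβ.le
  have hxin_i : a i ⬝ᵥ x + 2 * (β * (L / √lammin)) ≤ b i := by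
    simpa only [mul_div_assoc, mul_assoc] using hxin i
  rw [sub_dotProduct] at hdev
  linarith

/-- The shrunk polytope (intersected with the norm ball)
is contained in the conservative safe set. -/
theorem shrunk_subset_conservative
    (d m : ℕ) (hd : 0 < d)
    (a ahat : Fin m → (Fin d → ℝ)) (b : Fin m → ℝ)
    (V : Matrix (Fin d) (Fin d) ℝ) (hV : V.PosDef)
    (β L lammin : ℝ) (hβ : 0 < β) (hL : 0 < L)
    (hlam : lammin = ⨅ i, hV.1.eigenvalues i)
    (hconf : ∀ i, Real.sqrt ((ahat i - a i) ⬝ᵥ V.mulVec (ahat i - a i)) ≤ β)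
    (x : Fin d → ℝ)
    (hxin : ∀ i, a i ⬝ᵥ x + 2 * β * L / Real.sqrt lammin ≤ b i)
    (hxnorm : Real.sqrt (x ⬝ᵥ x) ≤ L) :
    ∀ i, ahat i ⬝ᵥ x + β * Real.sqrt (x ⬝ᵥ V⁻¹.mulVec x) ≤ b i :=
  shrunk_subset_conservative_general d m hd a ahat b V hV β L lammin hβ hlam hconf x hxin hxnorm
end

section
/- Let f_t : ℝ^d → ℝ, t = 1,...,T, be convex differentiable functions with ‖∇f_t(x)‖ ≤ G on a nonempty closed convex set K with ‖x‖ ≤ L for all x ∈ K. Let x_1 ∈ K and x_{t+1} = Π_K(x_t − η ∇f_t(x_t)) with η = 2L/(G√T). Then for every x* ∈ K, ∑_{t=1}^T (f_t(x_t) − f_t(x*)) ≤ 2LG√T. -/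
/-!
Convexity bounds the regret of round `t` by the linearization `⟪∇f_t(x_t), x_t - x*⟫`, and
projecting onto a convex set does not increase the distance to any of its points, so
`‖x_{t+1} - x*‖² ≤ ‖x_t - x*‖² - 2η⟪∇f_t(x_t), x_t - x*⟫ + η²G²`. Summing, the distances
telescope: `2η · regret ≤ ‖x_1 - x*‖² + Tη²G² ≤ 4L² + Tη²G²`, and `η = 2L/(G√T)` balances
the two terms.
-/

open RealInnerProductSpace Finset

theorem ConvexOn.le_sub_of_hasFDerivAt {E : Type*} [NormedAddCommGroup E] [NormedSpace ℝ E]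
    {s : Set E} {f : E → ℝ} {f' : E →L[ℝ] ℝ} {x y : E}
    (hf : ConvexOn ℝ s f) (hx : x ∈ s) (hy : y ∈ s) (hf' : HasFDerivAt f f' x) :
    f' (y - x) ≤ f y - f x := by
  let l : ℝ →ᵃ[ℝ] E := AffineMap.lineMap x y
  have hl : HasDerivAt (f ∘ l) (f' (y - x)) 0 :=
    hf'.comp_hasDerivAt_of_eq 0 AffineMap.hasDerivAt_lineMap
      (AffineMap.lineMap_apply_zero x y).symm
  simpa [l, slope_def_field] using (hf.comp_affineMap l).le_slope_of_hasDerivAt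
    (x := 0) (y := 1) (by simpa [l]) (by simpa [l]) zero_lt_one hl

section
variable {E : Type*} [NormedAddCommGroup E] [InnerProductSpace ℝ E]

theorem ConvexOn.inner_le_sub_of_hasGradientAt [CompleteSpace E] {s : Set E} {f : E → ℝ}
    {g x y : E} (hf : ConvexOn ℝ s f) (hx : x ∈ s) (hy : y ∈ s) (hg : HasGradientAt f g x) :
    ⟪g, y - x⟫ ≤ f y - f x := by
  simpa using hf.le_sub_of_hasFDerivAt hx hy hg.hasFDerivAt

theorem Convex.norm_sub_le_of_forall_norm_sub_le {K : Set E} (hK : Convex ℝ K) {y p z : E}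
    (hp : p ∈ K) (hmin : ∀ w ∈ K, ‖y - p‖ ≤ ‖y - w‖) (hz : z ∈ K) : ‖p - z‖ ≤ ‖y - z‖ := by
  have : Nonempty K := ⟨⟨p, hp⟩⟩
  have hinf : ‖y - p‖ = ⨅ w : K, ‖y - w‖ :=
    le_antisymm (le_ciInf fun w => hmin w w.2)
      (ciInf_le ⟨0, by rintro _ ⟨w, rfl⟩; positivity⟩ (⟨p, hp⟩ : K))
  have hobtuse : 0 ≤ ⟪y - p, p - z⟫ := by
    have := (norm_eq_iInf_iff_real_inner_le_zero hK hp).mp hinf z hz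
    rw [← neg_sub p z, inner_neg_right] at this
    linarith
  have hpyth : ‖y - z‖ ^ 2 = ‖y - p‖ ^ 2 + 2 * ⟪y - p, p - z⟫ + ‖p - z‖ ^ 2 := by
    rw [← norm_add_sq_real, sub_add_sub_cancel]
  exact (sq_le_sq₀ (norm_nonneg _) (norm_nonneg _)).mp (by nlinarith [sq_nonneg ‖y - p‖])
variable [CompleteSpace E] {K : Set E}

theorem ConvexOn.two_mul_sub_le_of_projected_gradient_step (hK : Convex ℝ K) {f : E → ℝ}
    (hf : ConvexOn ℝ K f) {g x p z : E} {η : ℝ} (hη : 0 ≤ η) (hx : x ∈ K)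
    (hg : HasGradientAt f g x) (hp : p ∈ K) (hmin : ∀ w ∈ K, ‖x - η • g - p‖ ≤ ‖x - η • g - w‖)
    (hz : z ∈ K) :
    2 * η * (f x - f z) ≤ ‖x - z‖ ^ 2 - ‖p - z‖ ^ 2 + η ^ 2 * ‖g‖ ^ 2 := by
  have hgrad : f x - f z ≤ ⟪g, x - z⟫ := by
    have := hf.inner_le_sub_of_hasGradientAt hx hz hg
    rw [← neg_sub x z, inner_neg_right] at this
    linarith
  have hproj : ‖p - z‖ ≤ ‖x - η • g - z‖ := hK.norm_sub_le_of_forall_norm_sub_le hp hmin hz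
  have hexpand : ‖x - η • g - z‖ ^ 2 = ‖x - z‖ ^ 2 - 2 * η * ⟪g, x - z⟫ + η ^ 2 * ‖g‖ ^ 2 := by
    rw [sub_right_comm, norm_sub_sq_real, inner_smul_right, norm_smul, Real.norm_of_nonneg hη,
      real_inner_comm]
    ring
  nlinarith [pow_le_pow_left₀ (norm_nonneg _) hproj 2]

theorem projected_gradient_regret_le (hK : Convex ℝ K) {P : E → E}
    (hP : ∀ y, P y ∈ K ∧ ∀ w ∈ K, ‖y - P y‖ ≤ ‖y - w‖) {f : ℕ → E → ℝ} {g : ℕ → E → E}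
    (hf : ∀ t, ConvexOn ℝ K (f t)) (hg : ∀ t, ∀ x ∈ K, HasGradientAt (f t) (g t x) x) {G : ℝ}
    (hgG : ∀ t, ∀ x ∈ K, ‖g t x‖ ≤ G) {η : ℝ} (hη : 0 ≤ η) {x : ℕ → E} (hx₀ : x 0 ∈ K)
    (hstep : ∀ t, x (t + 1) = P (x t - η • g t (x t))) {z : E} (hz : z ∈ K) (T : ℕ) :
    2 * η * ∑ t ∈ range T, (f t (x t) - f t z) ≤ ‖x 0 - z‖ ^ 2 + T * (η * G) ^ 2 := by
  have hxK : ∀ t, x t ∈ K := by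
    intro t
    induction t with
    | zero => exact hx₀
    | succ t _ => rw [hstep t]; exact (hP _).1
  have hdescent : ∀ t, 2 * η * (f t (x t) - f t z) ≤
      ‖x t - z‖ ^ 2 - ‖x (t + 1) - z‖ ^ 2 + (η * G) ^ 2 := by
    intro t
    have hgt := pow_le_pow_left₀ (norm_nonneg _) (hgG t _ (hxK t)) 2
    rw [hstep t]
    nlinarith [(hf t).two_mul_sub_le_of_projected_gradient_step hK hη (hxK t)
      (hg t _ (hxK t)) (hP _).1 (hP _).2 hz]
  calc 2 * η * ∑ t ∈ range T, (f t (x t) - f t z)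
      ≤ ∑ t ∈ range T, (‖x t - z‖ ^ 2 - ‖x (t + 1) - z‖ ^ 2 + (η * G) ^ 2) := by
        rw [mul_sum]; exact sum_le_sum fun t _ => hdescent t
    _ = ‖x 0 - z‖ ^ 2 - ‖x T - z‖ ^ 2 + T * (η * G) ^ 2 := by
        rw [sum_add_distrib, sum_range_sub', sum_const, card_range, nsmul_eq_mul]
    _ ≤ ‖x 0 - z‖ ^ 2 + T * (η * G) ^ 2 := by linarith [sq_nonneg ‖x T - z‖]

end

theorem ogd_regret_general
    (d T : ℕ) (hT : 0 < T) (G L η : ℝ) (hG : 0 < G) (hL : 0 < L)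
    (K : Set (EuclideanSpace ℝ (Fin d)))
    (hKcx : Convex ℝ K)
    (hKbd : ∀ x ∈ K, ‖x‖ ≤ L)
    (P : EuclideanSpace ℝ (Fin d) → EuclideanSpace ℝ (Fin d))
    (hP : ∀ x, P x ∈ K ∧ ∀ y ∈ K, ‖x - P x‖ ≤ ‖x - y‖)
    (f : ℕ → EuclideanSpace ℝ (Fin d) → ℝ)
    (g : ℕ → EuclideanSpace ℝ (Fin d) → EuclideanSpace ℝ (Fin d))
    (hconv : ∀ t, ConvexOn ℝ Set.univ (f t))
    (hgrad : ∀ t x, HasGradientAt (f t) (g t x) x)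
    (hgbd : ∀ t, ∀ x ∈ K, ‖g t x‖ ≤ G)
    (x : ℕ → EuclideanSpace ℝ (Fin d))
    (hx0 : x 0 ∈ K)
    (hη : η = 2 * L / (G * Real.sqrt T))
    (hstep : ∀ t, x (t + 1) = P (x t - η • g t (x t)))
    (xstar : EuclideanSpace ℝ (Fin d)) (hxstar : xstar ∈ K) :
    ∑ t ∈ Finset.range T, (f t (x t) - f t xstar) ≤ 2 * L * G * Real.sqrt T := by
  have hsqrtT : 0 < Real.sqrt T := Real.sqrt_pos.mpr (by exact_mod_cast hT)
  have hη₀ : 0 < η := by rw [hη]; positivity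
  have hdiam : ‖x 0 - xstar‖ ≤ 2 * L := by
    linarith [norm_sub_le (x 0) xstar, hKbd _ hx0, hKbd _ hxstar]
  have hregret := projected_gradient_regret_le hKcx hP
    (fun t => (hconv t).subset (Set.subset_univ K) hKcx) (fun t y _ => hgrad t y) hgbd
    hη₀.le hx0 hstep hxstar T
  refine le_of_mul_le_mul_left ?_ (by positivity : (0 : ℝ) < 2 * η)
  calc 2 * η * ∑ t ∈ range T, (f t (x t) - f t xstar)
      ≤ ‖x 0 - xstar‖ ^ 2 + T * (η * G) ^ 2 := hregret
    _ ≤ (2 * L) ^ 2 + T * (η * G) ^ 2 := by gcongr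
    _ = 2 * η * (2 * L * G * Real.sqrt T) := by
        rw [hη]
        field_simp
        rw [Real.sq_sqrt (Nat.cast_nonneg T)]
        ring

/-- Online projected gradient descent regret bound. -/
theorem ogd_regret
    (d T : ℕ) (hT : 0 < T) (G L η : ℝ) (hG : 0 < G) (hL : 0 < L)
    (K : Set (EuclideanSpace ℝ (Fin d)))
    (hKne : K.Nonempty) (hKcl : IsClosed K) (hKcx : Convex ℝ K)
    (hKbd : ∀ x ∈ K, ‖x‖ ≤ L)
    (P : EuclideanSpace ℝ (Fin d) → EuclideanSpace ℝ (Fin d))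
    (hP : ∀ x, P x ∈ K ∧ ∀ y ∈ K, ‖x - P x‖ ≤ ‖x - y‖)
    (f : ℕ → EuclideanSpace ℝ (Fin d) → ℝ)
    (g : ℕ → EuclideanSpace ℝ (Fin d) → EuclideanSpace ℝ (Fin d))
    (hconv : ∀ t, ConvexOn ℝ Set.univ (f t))
    (hgrad : ∀ t x, HasGradientAt (f t) (g t x) x)
    (hgbd : ∀ t, ∀ x ∈ K, ‖g t x‖ ≤ G)
    (x : ℕ → EuclideanSpace ℝ (Fin d))
    (hx0 : x 0 ∈ K)
    (hη : η = 2 * L / (G * Real.sqrt T))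
    (hstep : ∀ t, x (t + 1) = P (x t - η • g t (x t)))
    (xstar : EuclideanSpace ℝ (Fin d)) (hxstar : xstar ∈ K) :
    ∑ t ∈ Finset.range T, (f t (x t) - f t xstar) ≤ 2 * L * G * Real.sqrt T :=
  ogd_regret_general d T hT G L η hG hL K hKcx hKbd P hP f g hconv hgrad hgbd x hx0 hη hstep xstar
    hxstar
end

section
/- Let K be a nonempty closed convex subset of ℝ^d, f : ℝ^d → ℝ convex and differentiable with ‖∇f(y)‖ ≤ G for all y, x ∈ K, η > 0, and x' = Π_K(x − η∇f(x)). Then for any z ∈ K, 2∇f(x)^⊤(x − z) ≤ (‖x − z‖² − ‖x' − z‖²)/η + ηG². -/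
/-!
Write `w = x - η • g x`. Since `x'` is a nearest point of the convex set `K` to `w`, the
obtuse-angle criterion `⟪w - x', z - x'⟫ ≤ 0` gives `‖x' - z‖ ≤ ‖w - z‖` for `z ∈ K`.
Expanding `‖w - z‖² = ‖x - z‖² - 2η⟪g x, x - z⟫ + η²‖g x‖²` and using `‖g x‖ ≤ G`
yields the bound.
-/

open RealInnerProductSpace

section InnerProductSpace

variable {E : Type*} [NormedAddCommGroup E] [InnerProductSpace ℝ E]

theorem real_inner_sub_le_zero_of_forall_norm_sub_le {K : Set E} (hK : Convex ℝ K) {w p : E}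
    (hp : p ∈ K) (hmin : ∀ y ∈ K, ‖w - p‖ ≤ ‖w - y‖) {y : E} (hy : y ∈ K) :
    ⟪w - p, y - p⟫ ≤ 0 := by
  have : Nonempty K := ⟨⟨p, hp⟩⟩
  have hinf : ‖w - p‖ = ⨅ y : K, ‖w - y‖ :=
    le_antisymm (le_ciInf fun y => hmin y y.2)
      (ciInf_le ⟨0, Set.forall_mem_range.2 fun _ => norm_nonneg _⟩ (⟨p, hp⟩ : K))
  exact (norm_eq_iInf_iff_real_inner_le_zero hK hp).mp hinf y hy

theorem norm_sub_sq_le_of_real_inner_le_zero {w p z : E} (h : ⟪w - p, z - p⟫ ≤ 0) :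
    ‖p - z‖ ^ 2 ≤ ‖w - z‖ ^ 2 := by
  have hexp : ‖w - z‖ ^ 2 = ‖w - p‖ ^ 2 + ‖p - z‖ ^ 2 - 2 * ⟪w - p, z - p⟫ := by
    rw [show w - z = (w - p) - (z - p) by abel, norm_sub_sq_real, ← norm_neg (z - p), neg_sub]
    ring
  nlinarith [sq_nonneg ‖w - p‖]

theorem norm_sub_sq_le_of_forall_norm_sub_le {K : Set E} (hK : Convex ℝ K) {w p z : E}
    (hp : p ∈ K) (hmin : ∀ y ∈ K, ‖w - p‖ ≤ ‖w - y‖) (hz : z ∈ K) :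
    ‖p - z‖ ^ 2 ≤ ‖w - z‖ ^ 2 :=
  norm_sub_sq_le_of_real_inner_le_zero
    (real_inner_sub_le_zero_of_forall_norm_sub_le hK hp hmin hz)

theorem norm_sub_smul_sub_sq (x v z : E) (η : ℝ) :
    ‖x - η • v - z‖ ^ 2 = ‖x - z‖ ^ 2 - 2 * η * ⟪v, x - z⟫ + η ^ 2 * ‖v‖ ^ 2 := by
  rw [show x - η • v - z = (x - z) - η • v by abel, norm_sub_sq_real, real_inner_smul_right,
    real_inner_comm, norm_smul, Real.norm_eq_abs, mul_pow, sq_abs]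
  ring

end InnerProductSpace

theorem pgd_step_inequality_general
    (d : ℕ) (G η : ℝ) (hη : 0 < η)
    (K : Set (EuclideanSpace ℝ (Fin d)))
    (hKcx : Convex ℝ K)
    (P : EuclideanSpace ℝ (Fin d) → EuclideanSpace ℝ (Fin d))
    (hP : ∀ w, P w ∈ K ∧ ∀ y ∈ K, ‖w - P w‖ ≤ ‖w - y‖)
    (g : EuclideanSpace ℝ (Fin d) → EuclideanSpace ℝ (Fin d))
    (hgbd : ∀ y, ‖g y‖ ≤ G)
    (x : EuclideanSpace ℝ (Fin d))
    (x' : EuclideanSpace ℝ (Fin d)) (hx' : x' = P (x - η • g x))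
    (z : EuclideanSpace ℝ (Fin d)) (hz : z ∈ K) :
    2 * (inner ℝ (g x) (x - z) : ℝ) ≤ (‖x - z‖ ^ 2 - ‖x' - z‖ ^ 2) / η + η * G ^ 2 := by
  obtain ⟨hmem, hmin⟩ := hP (x - η • g x)
  have hproj : ‖x' - z‖ ^ 2 ≤ ‖x - η • g x - z‖ ^ 2 :=
    hx' ▸ norm_sub_sq_le_of_forall_norm_sub_le hKcx hmem hmin hz
  have hstep := norm_sub_smul_sub_sq x (g x) z η
  have hgsq : ‖g x‖ ^ 2 ≤ G ^ 2 := pow_le_pow_left₀ (norm_nonneg _) (hgbd x) 2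
  rw [div_add' _ _ _ hη.ne', le_div_iff₀ hη]
  nlinarith [mul_le_mul_of_nonneg_left hgsq (sq_nonneg η)]

/-- One-step descent inequality for projected gradient descent. -/
theorem pgd_step_inequality
    (d : ℕ) (G η : ℝ) (hG : 0 < G) (hη : 0 < η)
    (K : Set (EuclideanSpace ℝ (Fin d)))
    (hKne : K.Nonempty) (hKcl : IsClosed K) (hKcx : Convex ℝ K)
    (P : EuclideanSpace ℝ (Fin d) → EuclideanSpace ℝ (Fin d))
    (hP : ∀ w, P w ∈ K ∧ ∀ y ∈ K, ‖w - P w‖ ≤ ‖w - y‖)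
    (f : EuclideanSpace ℝ (Fin d) → ℝ)
    (g : EuclideanSpace ℝ (Fin d) → EuclideanSpace ℝ (Fin d))
    (hconv : ConvexOn ℝ Set.univ f)
    (hgrad : ∀ y, HasGradientAt f (g y) y)
    (hgbd : ∀ y, ‖g y‖ ≤ G)
    (x : EuclideanSpace ℝ (Fin d)) (hx : x ∈ K)
    (x' : EuclideanSpace ℝ (Fin d)) (hx' : x' = P (x - η • g x))
    (z : EuclideanSpace ℝ (Fin d)) (hz : z ∈ K) :
    2 * (inner ℝ (g x) (x - z) : ℝ) ≤ (‖x - z‖ ^ 2 - ‖x' - z‖ ^ 2) / η + η * G ^ 2 :=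
  pgd_step_inequality_general d G η hη K hKcx P hP g hgbd x x' hx' z hz
end
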